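/- arXiv:1307.5999 — 2 statements merged into one kernel-verified Lean document; each statement's English description precedes it below -/
import Mathlib

section
/- Let {p_n} be a sequence of monic polynomials over ℝ orthogonal with respect to a quasi-definite linear functional u (i.e., ⟨u, p_n p_m⟩ = 0 for n ≠ m and ⟨u, p_n^2⟩ ≠ 0), and let v be a linear functional on polynomials, ξ ∈ ℝ, with (x - ξ)·v = u (meaning ⟨v, (x-ξ) q⟩ = ⟨u, q⟩ for all polynomials q). Suppose {q_n} is a monic polynomial sequence orthogonal with respect to v. Then for each n ≥ 1 there exists a real constant a_n such that q_n = p_n + a_n p_{n-1}. -/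
open Polynomial

lemma expand_aux (p : ℕ → Polynomial ℝ) (hm : ∀ n, (p n).Monic)
    (hd : ∀ n, (p n).natDegree = n) :
    ∀ n (r : Polynomial ℝ), r.natDegree ≤ n →
      ∃ c : ℕ → ℝ, r = ∑ k ∈ Finset.range (n + 1), C (c k) * p k := by
  intro n
  induction n with
  | zero =>
    intro r hr
    have hp0 : p 0 = 1 := by
      have := hd 0
      exact ((hm 0).natDegree_eq_zero).mp this
    refine ⟨fun _ => r.coeff 0, ?_⟩
    rw [Polynomial.eq_C_of_natDegree_le_zero hr]
    simp [hp0]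
  | succ n ih =>
    intro r hr
    set a := r.coeff (n + 1) with ha
    have h1 : (r - C a * p (n + 1)).natDegree ≤ n := by
      rw [Polynomial.natDegree_le_iff_coeff_eq_zero]
      intro m hmm
      rw [Polynomial.coeff_sub, Polynomial.coeff_C_mul]
      rcases eq_or_lt_of_le (Nat.succ_le_of_lt hmm) with h | h
      · rw [← h]
        have : (p (n + 1)).coeff (n + 1) = 1 := by
          have := (hm (n + 1)).coeff_natDegree
          rwa [hd (n + 1)] at this
        rw [this, ← ha]; ring
      · have h2 : r.coeff m = 0 :=
          Polynomial.coeff_eq_zero_of_natDegree_lt (lt_of_le_of_lt hr h)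
        have h3 : (p (n + 1)).coeff m = 0 :=
          Polynomial.coeff_eq_zero_of_natDegree_lt (by rw [hd]; exact h)
        rw [h2, h3]; ring
    obtain ⟨c, hc⟩ := ih _ h1
    refine ⟨fun k => if k = n + 1 then a else c k, ?_⟩
    have hsum : ∑ k ∈ Finset.range (n + 1), C (if k = n + 1 then a else c k) * p k
        = ∑ k ∈ Finset.range (n + 1), C (c k) * p k := by
      apply Finset.sum_congr rfl
      intro k hk
      have := Finset.mem_range.mp hk
      rw [if_neg (by omega)]
    rw [Finset.sum_range_succ, hsum, ← hc]
    simp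

lemma lin_sum (u : Polynomial ℝ →ₗ[ℝ] ℝ) (n : ℕ) (c : ℕ → ℝ) (p : ℕ → Polynomial ℝ)
    (s : Polynomial ℝ) :
    u ((∑ k ∈ Finset.range n, C (c k) * p k) * s)
      = ∑ k ∈ Finset.range n, c k * u (p k * s) := by
  rw [Finset.sum_mul, map_sum]
  apply Finset.sum_congr rfl
  intro k _
  have : C (c k) * p k * s = c k • (p k * s) := by
    rw [Polynomial.smul_eq_C_mul]; ring
  rw [this, map_smul, smul_eq_mul]

theorem stmt6
    (u v : Polynomial ℝ →ₗ[ℝ] ℝ) (ξ : ℝ)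
    (p q : ℕ → Polynomial ℝ)
    (hpmonic : ∀ n, (p n).Monic) (hpdeg : ∀ n, (p n).natDegree = n)
    (hporth : ∀ m n, m ≠ n → u (p m * p n) = 0)
    (hpqd : ∀ n, u (p n ^ 2) ≠ 0)
    (huv : ∀ r : Polynomial ℝ, v ((X - C ξ) * r) = u r)
    (hqmonic : ∀ n, (q n).Monic) (hqdeg : ∀ n, (q n).natDegree = n)
    (hqorth : ∀ m n, m ≠ n → v (q m * q n) = 0)
    (hqqd : ∀ n, v (q n ^ 2) ≠ 0) :
    ∀ n, 1 ≤ n → ∃ a : ℝ, q n = p n + C a * p (n - 1) := by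
  intro n hn
  obtain ⟨m, rfl⟩ : ∃ m, n = m + 1 := ⟨n - 1, (Nat.succ_pred_eq_of_pos hn).symm⟩
  set r := q (m + 1) - p (m + 1) with hr
  have hrd : r.natDegree ≤ m := by
    rw [Polynomial.natDegree_le_iff_coeff_eq_zero]
    intro j hj
    rw [hr, Polynomial.coeff_sub]
    rcases eq_or_lt_of_le (Nat.succ_le_of_lt hj) with h | h
    · rw [← h]
      have h1 : (q (m + 1)).coeff (m + 1) = 1 := by
        have := (hqmonic (m + 1)).coeff_natDegree
        rwa [hqdeg (m + 1)] at this
      have h2 : (p (m + 1)).coeff (m + 1) = 1 := by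
        have := (hpmonic (m + 1)).coeff_natDegree
        rwa [hpdeg (m + 1)] at this
      rw [h1, h2]; ring
    · rw [Polynomial.coeff_eq_zero_of_natDegree_lt (by rw [hqdeg]; exact h),
        Polynomial.coeff_eq_zero_of_natDegree_lt (by rw [hpdeg]; exact h)]; ring
  obtain ⟨c, hc⟩ := expand_aux p hpmonic hpdeg m r hrd
  have ck0 : ∀ k, k < m → c k = 0 := by
    intro k hk
    have h1 : u (r * p k) = c k * u (p k ^ 2) := by
      rw [hc, lin_sum]
      rw [Finset.sum_eq_single k]
      · rw [sq]
      · intro i _ hik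
        rw [hporth i k hik]; ring
      · intro h
        exact absurd (Finset.mem_range.mpr (by omega)) h
    have h2 : u (r * p k) = 0 := by
      have hq0 : u (q (m + 1) * p k) = 0 := by
        rw [← huv]
        obtain ⟨d, hd2⟩ := expand_aux q hqmonic hqdeg m ((X - C ξ) * p k)
          (by
            have : ((X - C ξ) * p k).natDegree = 1 + k := by
              rw [(Polynomial.monic_X_sub_C ξ).natDegree_mul (hpmonic k),
                Polynomial.natDegree_X_sub_C, hpdeg]
            omega)
        have : (X - C ξ) * (q (m + 1) * p k) = ((X - C ξ) * p k) * q (m + 1) := by ring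
        rw [this, hd2, lin_sum]
        apply Finset.sum_eq_zero
        intro j hj
        have := Finset.mem_range.mp hj
        rw [hqorth j (m + 1) (by omega)]; ring
      have hp0 : u (p (m + 1) * p k) = 0 := hporth (m + 1) k (by omega)
      rw [hr, sub_mul, map_sub, hq0, hp0, sub_zero]
    have : c k * u (p k ^ 2) = 0 := by rw [← h1, h2]
    rcases mul_eq_zero.mp this with h | h
    · exact h
    · exact absurd h (hpqd k)
  refine ⟨c m, ?_⟩
  have : r = C (c m) * p m := by
    rw [hc, Finset.sum_range_succ]
    have : ∑ k ∈ Finset.range m, C (c k) * p k = 0 := by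
      apply Finset.sum_eq_zero
      intro k hk
      rw [ck0 k (Finset.mem_range.mp hk)]
      simp
    rw [this, zero_add]
  have hmm : m + 1 - 1 = m := rfl
  rw [hmm]
  have := hr ▸ this
  linear_combination (norm := ring_nf) this
end

section
/- With the notation of the counterexample (d=2, C_{n,i} = −L_{n−1,i}^t, B_{n−1,1} the n×n matrix with only nonzero entry −1 at (n,n), M_n = C_{n,1}, C̃_{n,1} = C_{n,1}(I_n + B_{n−1,1}), C̃_{n,2} = C_{n,2}): the compatibility relations C̃_{n,1} M_{n−1} = M_n C_{n−1,1} and C̃_{n,2} M_{n−1} = M_n C_{n−1,2} hold for all n ≥ 2. -/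
open Matrix

/-- The matrix `L_{n-1,1}` with rows indexed by `Fin m`: ones at positions `(i,i)`. -/
def Lmat1 (m : ℕ) : Matrix (Fin m) (Fin (m + 1)) ℝ :=
  fun i j => if (j : ℕ) = (i : ℕ) then 1 else 0

/-- The matrix `L_{n-1,2}` with rows indexed by `Fin m`: ones at positions `(i,i+1)`. -/
def Lmat2 (m : ℕ) : Matrix (Fin m) (Fin (m + 1)) ℝ :=
  fun i j => if (j : ℕ) = (i : ℕ) + 1 then 1 else 0

/-- `C_{n,1} = -L_{n-1,1}ᵗ`. -/
def Cmat1 (n : ℕ) : Matrix (Fin (n + 1)) (Fin n) ℝ := -(Lmat1 n)ᵀ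

/-- `C_{n,2} = -L_{n-1,2}ᵗ`. -/
def Cmat2 (n : ℕ) : Matrix (Fin (n + 1)) (Fin n) ℝ := -(Lmat2 n)ᵀ

theorem stmt18 (m : ℕ)
    (B : Matrix (Fin (m + 2)) (Fin (m + 2)) ℝ)
    (hB : ∀ i j, B i j = if (i : ℕ) = m + 1 ∧ (j : ℕ) = m + 1 then -1 else 0) :
    (Cmat1 (m + 2) * (1 + B)) * Cmat1 (m + 1) = Cmat1 (m + 2) * Cmat1 (m + 1) ∧
    Cmat2 (m + 2) * Cmat1 (m + 1) = Cmat1 (m + 2) * Cmat2 (m + 1) := by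
  have hBC : B * Cmat1 (m + 1) = 0 := by
    ext i j
    simp only [Matrix.mul_apply, Cmat1, Lmat1, Matrix.neg_apply, Matrix.transpose_apply,
      Matrix.zero_apply, hB]
    apply Finset.sum_eq_zero
    intro k _
    rcases Nat.lt_or_ge (k : ℕ) (m + 1) with h | h
    · have : ¬((i : ℕ) = m + 1 ∧ (k : ℕ) = m + 1) := by omega
      simp [this]
    · have : ¬((k : ℕ) = (j : ℕ)) := by omega
      simp [this]
  constructor
  · rw [Matrix.mul_add, Matrix.mul_one, Matrix.add_mul, Matrix.mul_assoc, hBC,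
      Matrix.mul_zero, add_zero]
  · ext i j
    simp only [Matrix.mul_apply, Cmat1, Cmat2, Lmat1, Lmat2, Matrix.neg_apply,
      Matrix.transpose_apply, neg_mul_neg, ite_mul, one_mul, zero_mul, mul_ite, mul_one, mul_zero]
    rcases Nat.lt_or_ge (j : ℕ) (m + 1) with h | h
    · rw [Finset.sum_eq_single ⟨(j : ℕ), by omega⟩, Finset.sum_eq_single ⟨(j : ℕ) + 1, by omega⟩]
      · simp
      · intro k _ hk
        have : (k : ℕ) ≠ (j : ℕ) + 1 := fun he => hk (by ext; simpa using he)
        simp [this]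
      · simp
      · intro k _ hk
        have : (k : ℕ) ≠ (j : ℕ) := fun he => hk (by ext; simpa using he)
        simp [this]
      · simp
    · exact absurd j.isLt (by omega)
end
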